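/- Let C be a binary code of length n with C^⊥ ⊆ C and C ≠ 𝔽₂ⁿ. Then the pair (C, C^⊥) is a maximal element of the poset 𝒫 of CSS-T pairs (i.e., (C, C^⊥) is a CSS-T pair and every CSS-T pair (D₁, D₂) with D₂ ≠ {0}, C ⊆ D₁ and C^⊥ ⊆ D₂ satisfies D₁ = C and D₂ = C^⊥) if and only if C^{⋆2} = C. -/

import Mathlib

open Finset

/-- The Euclidean dual of a binary code. -/
def dualCode {n : ℕ} (C : Submodule (ZMod 2) (Fin n → ZMod 2)) :
    Submodule (ZMod 2) (Fin n → ZMod 2) where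
  carrier := {x | ∀ c ∈ C, ∑ i, x i * c i = 0}
  add_mem' := by
    intro a b ha hb c hc
    have : ∑ i, (a + b) i * c i = ∑ i, (a i * c i + b i * c i) := by
      apply Finset.sum_congr rfl
      intro i _
      simp [add_mul]
    rw [this, Finset.sum_add_distrib, ha c hc, hb c hc, add_zero]
  zero_mem' := by
    intro c hc
    simp
  smul_mem' := by
    intro r a ha c hc
    have : ∑ i, (r • a) i * c i = r * ∑ i, a i * c i := by
      rw [Finset.mul_sum]
      apply Finset.sum_congr rfl
      intro i _
      simp [mul_assoc]
    rw [this, ha c hc, mul_zero]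

/-- The (componentwise) Schur product of two binary codes. -/
def schur {n : ℕ} (C D : Submodule (ZMod 2) (Fin n → ZMod 2)) :
    Submodule (ZMod 2) (Fin n → ZMod 2) :=
  Submodule.span (ZMod 2) {x | ∃ c ∈ C, ∃ d ∈ D, x = c * d}

/-- A pair of binary codes `(C₁, C₂)` is a CSS-T pair if `C₂ ⊆ C₁ ∩ (C₁^{⋆2})^⊥`. -/
def IsCSST {n : ℕ} (C₁ C₂ : Submodule (ZMod 2) (Fin n → ZMod 2)) : Prop :=
  C₂ ≤ C₁ ⊓ dualCode (schur C₁ C₁)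

/-!
Both directions come down to the double-dual identity `C^⊥⊥ = C`. For any CSS-T pair
`(D₁, D₂)`, idempotence of `𝔽₂` gives `D₁ ⊆ D₁^{⋆2}`, hence `D₂ ⊆ D₁^⊥`; so if `C ⊆ D₁` and
`C^⊥ ⊆ D₂`, then `D₂ ⊆ D₁^⊥ ⊆ C^⊥` and `D₁ ⊆ D₂^⊥ ⊆ C^⊥⊥ = C`. Thus `(C, C^⊥)` is maximal as
soon as it is a CSS-T pair, and, given `C^⊥ ⊆ C`, it is one iff `C^⊥ ⊆ (C^{⋆2})^⊥`, i.e.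
`C^{⋆2} ⊆ C`.
-/

section DotProduct

variable {R ι : Type*} [CommSemiring R] [Fintype ι]

theorem dotProductBilin_isRefl :
    LinearMap.BilinForm.IsRefl (dotProductBilin R R : LinearMap.BilinForm R (ι → R)) :=
  fun x y h => by simpa [dotProduct_comm] using h

theorem dotProductBilin_nondegenerate :
    (dotProductBilin R R : LinearMap.BilinForm R (ι → R)).Nondegenerate := by
  classical
  refine ⟨fun x hx => funext fun i => ?_, fun y hy => funext fun i => ?_⟩
  · simpa using hx (Pi.single i 1)
  · simpa using hy (Pi.single i 1)

end DotProduct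

section BinaryCode

variable {n : ℕ} {C D : Submodule (ZMod 2) (Fin n → ZMod 2)}

theorem dualCode_eq_orthogonal (C : Submodule (ZMod 2) (Fin n → ZMod 2)) :
    dualCode C = LinearMap.BilinForm.orthogonal (dotProductBilin (ZMod 2) (ZMod 2)) C := by
  ext x
  simp only [LinearMap.BilinForm.mem_orthogonal_iff, dotProductBilin_apply_apply,
    dotProduct_comm _ x]
  rfl

@[simp]
theorem dualCode_dualCode (C : Submodule (ZMod 2) (Fin n → ZMod 2)) :
    dualCode (dualCode C) = C := by
  rw [dualCode_eq_orthogonal, dualCode_eq_orthogonal]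
  exact LinearMap.BilinForm.orthogonal_orthogonal dotProductBilin_nondegenerate
    dotProductBilin_isRefl C

theorem le_dualCode_comm (h : C ≤ dualCode D) : D ≤ dualCode C := fun d hd c hc => by
  simpa [mul_comm] using h hc d hd

theorem dualCode_anti (h : C ≤ D) : dualCode D ≤ dualCode C := fun _ hx c hc => hx c (h hc)

theorem dualCode_le_dualCode_iff : dualCode C ≤ dualCode D ↔ D ≤ C :=
  ⟨fun h => by simpa using dualCode_anti h, dualCode_anti⟩

theorem le_schur_self (C : Submodule (ZMod 2) (Fin n → ZMod 2)) : C ≤ schur C C := by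
  intro c hc
  refine Submodule.subset_span ⟨c, hc, c, hc, funext fun i => ?_⟩
  have idem : ∀ a : ZMod 2, a = a * a := by decide
  exact idem (c i)

theorem IsCSST.le_dualCode (h : IsCSST C D) : D ≤ dualCode C :=
  fun _ hd => dualCode_anti (le_schur_self C) (h hd).2

theorem IsCSST.eq_of_le {D₁ D₂ : Submodule (ZMod 2) (Fin n → ZMod 2)} (h : IsCSST D₁ D₂)
    (h₁ : C ≤ D₁) (h₂ : dualCode C ≤ D₂) : D₁ = C ∧ D₂ = dualCode C := by
  have hD₁ : D₁ ≤ C := calc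
    D₁ ≤ dualCode D₂ := le_dualCode_comm h.le_dualCode
    _ ≤ dualCode (dualCode C) := dualCode_anti h₂
    _ = C := dualCode_dualCode C
  exact ⟨hD₁.antisymm h₁, (h.le_dualCode.trans (dualCode_anti h₁)).antisymm h₂⟩

theorem isCSST_dualCode_iff (hdual : dualCode C ≤ C) :
    IsCSST C (dualCode C) ↔ schur C C = C := by
  rw [IsCSST, le_inf_iff, dualCode_le_dualCode_iff, (le_schur_self C).ge_iff_eq']
  exact and_iff_right hdual

end BinaryCode

theorem stmt_13_general (n : ℕ) (C : Submodule (ZMod 2) (Fin n → ZMod 2))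
    (hdual : dualCode C ≤ C) :
    (IsCSST C (dualCode C) ∧
      ∀ D₁ D₂ : Submodule (ZMod 2) (Fin n → ZMod 2),
        IsCSST D₁ D₂ → D₂ ≠ ⊥ → C ≤ D₁ → dualCode C ≤ D₂ → D₁ = C ∧ D₂ = dualCode C)
    ↔ schur C C = C := by
  rw [isCSST_dualCode_iff hdual]
  exact and_iff_left fun _ _ hD _ h₁ h₂ => hD.eq_of_le h₁ h₂

theorem stmt_13 (n : ℕ) (C : Submodule (ZMod 2) (Fin n → ZMod 2))
    (hdual : dualCode C ≤ C) (hC : C ≠ ⊤) :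
    (IsCSST C (dualCode C) ∧
      ∀ D₁ D₂ : Submodule (ZMod 2) (Fin n → ZMod 2),
        IsCSST D₁ D₂ → D₂ ≠ ⊥ → C ≤ D₁ → dualCode C ≤ D₂ → D₁ = C ∧ D₂ = dualCode C)
    ↔ schur C C = C :=
  stmt_13_general n C hdual
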